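/- The set of leader codewords L(C) of a linear code C is a trial set for C with respect to any weight compatible order ≺: a word y is a correctable error (≺-minimal in its coset) if and only if y ≺ y + c or y = y + c for all c ∈ L(C). -/

import Mathlib

open Finset Set

variable {p m n : ℕ} [Fact p.Prime] {K : Type} [Field K] [Fintype K] [DecidableEq K]
  [Algebra (ZMod p) K]

/-- Hamming weight -/
def hw (v : Fin n → K) : ℕ := (Finset.univ.filter fun i => v i ≠ 0).card

/-- Hamming distance -/
def dH (x y : Fin n → K) : ℕ := hw (x - y)

/-- Hamming distance from a word to a set of words -/
noncomputable def dHSet (A : Set (Fin n → K)) (y : Fin n → K) : ℕ := sInf ((dH y) '' A)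

/-- y is a coset leader: minimal Hamming weight in its coset -/
def isCosetLeader (C : Submodule K (Fin n → K)) (y : Fin n → K) : Prop :=
  ∀ c ∈ C, hw y ≤ hw (y + c)

/-- the set of coset leaders -/
def CL (C : Submodule K (Fin n → K)) : Set (Fin n → K) := {y | isCosetLeader C y}

/-- weight of the coset of y -/
noncomputable def cosetWt (C : Submodule K (Fin n → K)) (y : Fin n → K) : ℕ :=
  sInf (hw '' {z | z - y ∈ C})

/-- minimum distance of the code -/
noncomputable def dmin (C : Submodule K (Fin n → K)) : ℕ :=
  sInf (hw '' {c | c ∈ C ∧ c ≠ 0})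

/-- covering radius -/
noncomputable def covRad (C : Submodule K (Fin n → K)) : ℕ :=
  sSup (Set.range fun y => dHSet (C : Set (Fin n → K)) y)

/-- Voronoi region of a codeword -/
def VorD (C : Submodule K (Fin n → K)) (c : Fin n → K) : Set (Fin n → K) :=
  {y | ∀ c' ∈ C, dH y c ≤ dH y c'}

/-- words at Hamming distance exactly one from A -/
def XB (A : Set (Fin n → K)) : Set (Fin n → K) := {y | dHSet A y = 1}

/-- boundary of a set of words -/
def bdry (A : Set (Fin n → K)) : Set (Fin n → K) := XB A ∪ XB Aᶜ

/-- canonical generator e_{ij} = β^{j-1} e_i -/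
def eGen (β : K) (i : Fin n) (j : Fin m) : Fin n → K := Pi.single i (β ^ (j : ℕ))

/-- leader codeword -/
def isLeaderCodeword (C : Submodule K (Fin n → K)) (b : Module.Basis (Fin m) (ZMod p) K)
    (β : K) (w : Fin n → K) : Prop :=
  w ≠ 0 ∧ w ∈ C ∧ ∃ (n₁ n₂ : Fin n → K) (i : Fin n) (j : Fin m),
    w = n₁ + eGen β i j - n₂ ∧
    (b.repr ((n₁ + eGen β i j) i) j).val = (b.repr (n₁ i) j).val + 1 ∧
    isCosetLeader C n₂ ∧ dHSet (CL C) n₁ ≤ 1 ∧ dHSet (CL C) (n₁ + eGen β i j) ≤ 1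

/-- correctable errors: minimal element of each coset w.r.t. the order r -/
def E0 (C : Submodule K (Fin n → K)) (r : (Fin n → K) → (Fin n → K) → Prop) :
    Set (Fin n → K) := {y | ∀ z, z - y ∈ C → z ≠ y → r y z}

/-- uncorrectable errors -/
def E1 (C : Submodule K (Fin n → K)) (r : (Fin n → K) → (Fin n → K) → Prop) :
    Set (Fin n → K) := (E0 C r)ᶜ

/-- H(y) = { c ∈ C : y - c ≺ y } -/
def Hset (C : Submodule K (Fin n → K)) (r : (Fin n → K) → (Fin n → K) → Prop)
    (y : Fin n → K) : Set (Fin n → K) := {c | c ∈ C ∧ r (y - c) y}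

/-- u is a larger half of c -/
def isLargerHalf (r : (Fin n → K) → (Fin n → K) → Prop) (c u : Fin n → K) : Prop :=
  r (u - c) u ∧ ∀ u', r (u' - c) u' → ¬ r u' u

/-- larger halves of elements of T -/
def LH (r : (Fin n → K) → (Fin n → K) → Prop) (T : Set (Fin n → K)) :
    Set (Fin n → K) := {u | ∃ c ∈ T, isLargerHalf r c u}

/-- x ⊂₁ y : componentwise F_p-coefficient containment with disjoint generalized
supports of x and y - x -/
def subset1 (b : Module.Basis (Fin m) (ZMod p) K) (x y : Fin n → K) : Prop :=
  (∀ (i : Fin n) (j : Fin m), (b.repr (x i) j).val ≤ (b.repr (y i) j).val) ∧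
  ∀ (i : Fin n) (j : Fin m), b.repr (x i) j ≠ 0 → b.repr ((y - x) i) j = 0

/-- minimal uncorrectable errors w.r.t. ⊂₁ -/
def M1 (C : Submodule K (Fin n → K)) (r : (Fin n → K) → (Fin n → K) → Prop)
    (b : Module.Basis (Fin m) (ZMod p) K) : Set (Fin n → K) :=
  {y | y ∈ E1 C r ∧ ∀ x, subset1 b x y → x ∈ E1 C r → x = y}

/-- trial set -/
def isTrialSet (C : Submodule K (Fin n → K)) (r : (Fin n → K) → (Fin n → K) → Prop)
    (T : Set (Fin n → K)) : Prop :=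
  T ⊆ (C : Set (Fin n → K)) ∧ (0 : Fin n → K) ∉ T ∧
    ∀ y, y ∈ E0 C r ↔ ∀ c ∈ T, (y = y + c ∨ r y (y + c))

/-!
A word y that is not ≺-minimal in its coset can always be moved strictly down by a leader
codeword. If y is a coset leader, the ≺-minimum e of its coset is a coset leader too (≺ refines
the weight), and e - y is a leader codeword with n₂ = y. Otherwise delete the nonzero
coordinates of y one at a time: by weight counting it suffices to treat a non-leader y that
becomes a coset leader z once one coordinate is deleted. Then, for a coset leader e of the
coset of y, the word u = z + (e - y) lies at distance at most one from e, so
e - y = u - z is a leader codeword, and y + (e - y) = e is lighter than y.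
-/

section Hamming

variable {ι : Type*} [Fintype ι] {β : ι → Type*}

lemma hammingDist_le_one_of_eq_of_ne [DecidableEq ι] [∀ i, DecidableEq (β i)]
    {x y : ∀ i, β i} (i : ι) (h : ∀ k ≠ i, x k = y k) : hammingDist x y ≤ 1 := by
  refine (Finset.card_le_card (t := {i}) fun k hk => ?_).trans (Finset.card_singleton i).le
  by_contra hki
  simp_all

lemma eq_of_hammingDist_le_one [∀ i, DecidableEq (β i)] {x y : ∀ i, β i}
    (h : hammingDist x y ≤ 1) {i k : ι} (hi : x i ≠ y i) (hk : x k ≠ y k) : i = k :=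
  Finset.card_le_one.1 h i (by simpa using hi) k (by simpa using hk)

lemma hammingDist_add_right [∀ i, AddGroup (β i)] [∀ i, DecidableEq (β i)] (x y z : ∀ i, β i) :
    hammingDist (x + z) (y + z) = hammingDist x y := by
  simp only [hammingDist, Pi.add_apply, ne_eq, add_left_inj]

lemma hammingNorm_le_hammingNorm_add_hammingDist [∀ i, AddGroup (β i)] [∀ i, DecidableEq (β i)]
    (x y : ∀ i, β i) : hammingNorm x ≤ hammingNorm y + hammingDist x y := by
  rw [← hammingDist_zero_right, ← hammingDist_zero_right, add_comm]
  exact hammingDist_triangle x y 0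

lemma hammingNorm_update_zero_add_one [DecidableEq ι] [∀ i, Zero (β i)] [∀ i, DecidableEq (β i)]
    {x : ∀ i, β i} {i : ι} (hi : x i ≠ 0) :
    hammingNorm (Function.update x i 0) + 1 = hammingNorm x := by
  rw [hammingNorm, hammingNorm, ← Finset.card_erase_add_one (s := {k | x k ≠ 0}) (a := i)
    (by simpa using hi)]
  congr 2
  ext k
  by_cases hk : k = i <;> simp [hk]

end Hamming

lemma ZMod.val_sub_one_add_one {N : ℕ} [Fact (1 < N)] {a : ZMod N} (ha : a ≠ 0) :
    (a - 1).val + 1 = a.val := by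
  have hpos := (ZMod.val_pos (a := a)).2 ha
  rw [ZMod.val_sub (by rw [ZMod.val_one]; exact hpos), ZMod.val_one]
  omega

section CosetLeaders

variable {n : ℕ} {K : Type} [Field K] [DecidableEq K] {C : Submodule K (Fin n → K)}

lemma hw_eq_hammingNorm (v : Fin n → K) : hw v = hammingNorm v := rfl

lemma dH_eq_hammingDist (x y : Fin n → K) : dH x y = hammingDist x y := by
  rw [dH, hammingDist_comm, hammingDist_eq_hammingNorm, hw_eq_hammingNorm, neg_add_eq_sub]

lemma isCosetLeader_zero : isCosetLeader C 0 := fun _ _ => by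
  simp [hw_eq_hammingNorm]

lemma isCosetLeader.eq_zero_of_mem {y : Fin n → K} (hy : isCosetLeader C y) (hyC : y ∈ C) :
    y = 0 := by
  have := hy (-y) (C.neg_mem hyC)
  rwa [add_neg_cancel, hw_eq_hammingNorm, hw_eq_hammingNorm, hammingNorm_zero,
    Nat.le_zero, hammingNorm_eq_zero] at this

lemma isCosetLeader.update_zero {w : Fin n → K} (hw : isCosetLeader C w) (i : Fin n) :
    isCosetLeader C (Function.update w i 0) := by
  by_cases hwi : w i = 0
  · rwa [← hwi, Function.update_eq_self]
  intro c hc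
  have hdel := hammingNorm_update_zero_add_one hwi
  have hdist : hammingDist (w + c) (Function.update w i 0 + c) ≤ 1 := by
    rw [hammingDist_add_right]
    exact hammingDist_le_one_of_eq_of_ne i fun k hk => by simp [hk]
  have := hammingNorm_le_hammingNorm_add_hammingDist (w + c) (Function.update w i 0 + c)
  have := hw c hc
  simp only [hw_eq_hammingNorm] at *
  omega

lemma exists_isCosetLeader_hw_lt [Fintype K] {y : Fin n → K} (hy : ¬ isCosetLeader C y) :
    ∃ e, isCosetLeader C e ∧ e - y ∈ C ∧ hw e < hw y := by
  obtain ⟨e, heC, he⟩ := Set.exists_min_image {v | v - y ∈ C} hw (Set.toFinite _)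
    ⟨y, by simp⟩
  have hcoset {c : Fin n → K} (hc : c ∈ C) : e + c - y ∈ C := by
    rw [add_sub_right_comm]; exact C.add_mem heC hc
  refine ⟨e, fun c hc => he _ (hcoset hc), heC, ?_⟩
  simp only [isCosetLeader, not_forall, not_le] at hy
  obtain ⟨c, hc, hlt⟩ := hy
  exact (he (y + c) (by simpa using hc)).trans_lt hlt

lemma dHSet_le_hammingDist {A : Set (Fin n → K)} {v w : Fin n → K} (hw : w ∈ A) :
    dHSet A v ≤ hammingDist v w :=
  dH_eq_hammingDist v w ▸ Nat.sInf_le ⟨w, hw, rfl⟩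

lemma exists_isCosetLeader_hammingDist_le {v : Fin n → K} (hv : dHSet (CL C) v ≤ 1) :
    ∃ w, isCosetLeader C w ∧ hammingDist v w ≤ 1 := by
  obtain ⟨w, hw, hvw⟩ := Nat.sInf_mem (s := dH v '' CL C) ⟨_, 0, isCosetLeader_zero, rfl⟩
  exact ⟨w, hw, dH_eq_hammingDist v w ▸ hvw ▸ hv⟩

lemma exists_isCosetLeader_eq_of_ne {u : Fin n → K} (hu0 : u ≠ 0) (hu : dHSet (CL C) u ≤ 1) :
    ∃ w i, isCosetLeader C w ∧ u i ≠ 0 ∧ ∀ k ≠ i, u k = w k := by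
  obtain ⟨w, hw, huw⟩ := exists_isCosetLeader_hammingDist_le hu
  obtain ⟨i, hi⟩ := Function.ne_iff.1 hu0
  by_cases hagree : ∀ k ≠ i, u k = w k
  · exact ⟨w, i, hw, hi, hagree⟩
  push Not at hagree
  obtain ⟨i₀, -, hi₀⟩ := hagree
  have hoff : ∀ k ≠ i₀, u k = w k := fun k hk => by
    by_contra hne; exact hk (eq_of_hammingDist_le_one huw hne hi₀)
  by_cases hui₀ : u i₀ = 0
  · have : u = Function.update w i₀ 0 := by
      ext k; by_cases hk : k = i₀ <;> simp [hk, hui₀, hoff]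
    exact ⟨u, i, this ▸ hw.update_zero i₀, hi, fun _ _ => rfl⟩
  · exact ⟨w, i₀, hw, hui₀, hoff⟩

end CosetLeaders

section LeaderCodewords

variable {p m n : ℕ} {K : Type} [Field K] [Algebra (ZMod p) K]
  {b : Module.Basis (Fin m) (ZMod p) K} {β : K}

lemma repr_sub_eGen_apply (hβ : ∀ j : Fin m, b j = β ^ (j : ℕ)) (v : Fin n → K) (i : Fin n)
    (j : Fin m) : b.repr ((v - eGen β i j) i) j = b.repr (v i) j - 1 := by
  rw [Pi.sub_apply, eGen, Pi.single_eq_same, ← hβ j, map_sub, Finsupp.sub_apply,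
    Module.Basis.repr_self, Finsupp.single_eq_same]

variable [Fact p.Prime] [DecidableEq K] {C : Submodule K (Fin n → K)}

lemma isLeaderCodeword_sub (hβ : ∀ j : Fin m, b j = β ^ (j : ℕ)) {u n₂ : Fin n → K}
    (hu : dHSet (CL C) u ≤ 1) (hn₂ : isCosetLeader C n₂) (hC : u - n₂ ∈ C) (hne : u ≠ n₂) :
    isLeaderCodeword C b β (u - n₂) := by
  have hu0 : u ≠ 0 := by
    rintro rfl
    exact hne (hn₂.eq_zero_of_mem (by simpa using C.neg_mem hC)).symm
  obtain ⟨w, i, hw, hui, hoff⟩ := exists_isCosetLeader_eq_of_ne hu0 hu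
  obtain ⟨j, hj⟩ := Finsupp.ne_iff.1 (b.repr.map_ne_zero_iff.2 hui)
  have hn₁ : dHSet (CL C) (u - eGen β i j) ≤ 1 :=
    (dHSet_le_hammingDist hw).trans <| hammingDist_le_one_of_eq_of_ne i fun k hk => by
      simp [eGen, hk, hoff k hk]
  refine ⟨sub_ne_zero.2 hne, hC, u - eGen β i j, n₂, i, j, by rw [sub_add_cancel], ?_, hn₂,
    hn₁, by rwa [sub_add_cancel]⟩
  rw [sub_add_cancel, repr_sub_eGen_apply hβ, ZMod.val_sub_one_add_one hj]

variable [Fintype K]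

theorem exists_isLeaderCodeword_hw_add_lt (hβ : ∀ j : Fin m, b j = β ^ (j : ℕ))
    (y : Fin n → K) (hy : ¬ isCosetLeader C y) :
    ∃ c, isLeaderCodeword C b β c ∧ hw (y + c) < hw y := by
  obtain ⟨i, hi⟩ := Function.ne_iff.1 fun h : y = 0 => hy (h ▸ isCosetLeader_zero)
  set z := Function.update y i 0
  have hzy : hammingDist z y ≤ 1 := hammingDist_le_one_of_eq_of_ne i fun k hk => by simp [z, hk]
  have hdel : hw z + 1 = hw y := hammingNorm_update_zero_add_one hi
  by_cases hz : isCosetLeader C z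
  · obtain ⟨e, he, hey, hlt⟩ := exists_isCosetLeader_hw_lt hy
    have hu : dHSet (CL C) (z + (e - y)) ≤ 1 := by
      have := hammingDist_add_right z y (e - y)
      rw [add_sub_cancel] at this
      exact (dHSet_le_hammingDist he).trans (this ▸ hzy)
    have hne : z + (e - y) ≠ z := by
      rw [Ne, add_eq_left, sub_eq_zero]
      rintro rfl
      exact hlt.false
    refine ⟨e - y, ?_, by rwa [add_sub_cancel]⟩
    simpa using isLeaderCodeword_sub hβ hu hz (by simpa using hey) hne
  · obtain ⟨c, hc, hlt⟩ := exists_isLeaderCodeword_hw_add_lt hβ z hz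
    have := hammingNorm_le_hammingNorm_add_hammingDist (y + c) (z + c)
    rw [hammingDist_add_right, hammingDist_comm] at this
    rw [hw_eq_hammingNorm, hw_eq_hammingNorm] at hlt hdel
    exact ⟨c, hc, by rw [hw_eq_hammingNorm, hw_eq_hammingNorm]; omega⟩
termination_by hw y
decreasing_by exact (hammingNorm_update_zero_add_one hi).le

theorem exists_isLeaderCodeword_lt (hβ : ∀ j : Fin m, b j = β ^ (j : ℕ))
    {r : (Fin n → K) → (Fin n → K) → Prop} [IsStrictTotalOrder (Fin n → K) r]
    (hwt : ∀ x y : Fin n → K, hw x < hw y → r x y) {y : Fin n → K} (hy : y ∉ E0 C r) :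
    ∃ c, isLeaderCodeword C b β c ∧ r (y + c) y := by
  by_cases hyCL : isCosetLeader C y
  · obtain ⟨e, hey, hmin⟩ := (Finite.wellFounded_of_trans_of_irrefl r).has_min
      {v | v - y ∈ C} ⟨y, by simp⟩
    have heCL : isCosetLeader C e := fun c hc => not_lt.1 fun hlt =>
      hmin (e + c) (by simpa [add_sub_right_comm] using C.add_mem hey hc) (hwt _ _ hlt)
    have hne : e ≠ y := by
      rintro rfl
      obtain ⟨z, hz, hzy, hnot⟩ : ∃ z, z - e ∈ C ∧ z ≠ e ∧ ¬ r e z := by simpa [E0] using hy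
      exact hmin z hz ((trichotomous_of r z e).resolve_right (not_or.2 ⟨hzy, hnot⟩))
    have hey_lt : r e y := (trichotomous_of r e y).resolve_right fun h =>
      h.elim hne fun hye => hmin y (by simp) hye
    refine ⟨e - y, isLeaderCodeword_sub hβ ?_ hyCL hey hne, by rwa [add_sub_cancel]⟩
    exact (dHSet_le_hammingDist heCL).trans (by simp)
  · obtain ⟨c, hc, hlt⟩ := exists_isLeaderCodeword_hw_add_lt hβ y hyCL
    exact ⟨c, hc, hwt _ _ hlt⟩

end LeaderCodewords

theorem stmt17_general (C : Submodule K (Fin n → K)) (b : Module.Basis (Fin m) (ZMod p) K) (β : K)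
    (hβ : ∀ j : Fin m, b j = β ^ (j : ℕ))
    (r : (Fin n → K) → (Fin n → K) → Prop)
    (hso : IsStrictTotalOrder (Fin n → K) r)
    (hwt : ∀ x y : Fin n → K, hw x < hw y → r x y) :
    ∀ y : Fin n → K, y ∈ E0 C r ↔
      ∀ c : Fin n → K, isLeaderCodeword C b β c →
        (y = y + c ∨ r y (y + c)) := by
  intro y
  refine ⟨fun hy c hc => ?_, fun h => ?_⟩
  · rw [or_iff_not_imp_left]
    exact hy (y + c) (by simpa using hc.2.1) ∘ Ne.symm
  · by_contra hy
    obtain ⟨c, hc, hlt⟩ := exists_isLeaderCodeword_lt hβ hwt hy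
    rcases h c hc with heq | hgt
    · rw [← heq] at hlt
      exact irrefl_of r y hlt
    · exact asymm_of r hgt hlt

/-- the set of leader codewords is a trial set. -/
theorem stmt17 (C : Submodule K (Fin n → K)) (b : Module.Basis (Fin m) (ZMod p) K) (β : K)
    (hβ : ∀ j : Fin m, b j = β ^ (j : ℕ))
    (r : (Fin n → K) → (Fin n → K) → Prop)
    (hso : IsStrictTotalOrder (Fin n → K) r)
    (hwt : ∀ x y : Fin n → K, hw x < hw y → r x y)
    (hsub : ∀ x y : Fin n → K, subset1 b x y → x ≠ y → r x y) :
    ∀ y : Fin n → K, y ∈ E0 C r ↔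
      ∀ c : Fin n → K, isLeaderCodeword C b β c →
        (y = y + c ∨ r y (y + c)) :=
  stmt17_general C b β hβ r hso hwt
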